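/- arXiv:1611.07474 — 3 statements merged into one kernel-verified Lean document; each statement's English description precedes it below -/
import Mathlib

section
/- The number of Dyck paths of semilength n with exactly k long ascents (ascents of length at least 2) equals (1/(n+1)) \binom{n+1}{k} \sum_{j=2k}^{n} \binom{j-k-1}{k-1} \binom{n+1-k}{n-j} for k \ge 1. -/
/-!
A Dyck path `U^g₀ D U^g₁ D ⋯ D U^gₙ` of semilength `n` is determined by its sequence of ascent
lengths `g = (g₀, …, gₙ)`: `n + 1` natural numbers with sum `n` such that every proper prefix
`(g₀, …, g_{t-1})` has sum at least `t`, and its long ascents are the entries `gᵢ ≥ 2`.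
By the cycle lemma, exactly one of the `n + 1` rotations of any sequence of `n + 1` naturals with
sum `n` has this prefix property: rotate so that the sequence starts at the first place where the
partial sums of `gᵢ - 1` attain their minimum. Rotations do not change the number of entries
`≥ 2`, so `(n + 1)` times the number of paths is the number of all sequences of length `n + 1`
and sum `n` with `k` entries `≥ 2`. Choosing the positions of these entries (`C(n+1, k)`), their
values with total `j ≥ 2k` (`C(j-k-1, k-1)` ways) and the remaining `0`/`1` entries
(`C(n+1-k, n-j)` ways) gives the formula.
-/

open DyckStep

/-- The number of long ascents (maximal runs of `U` steps of length at least 2) in a list of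
Dyck steps. -/
def longAscents (l : List DyckStep) : ℕ :=
  ((l.splitBy (· == ·)).filter fun r => r.head? == some U && decide (2 ≤ r.length)).length

section ListLemmas

variable {α : Type*}

theorem List.exists_splitBy_cons_eq (r : α → α → Bool) (b : α) (l : List α) :
    ∃ g gs, (b :: l).splitBy r = (b :: g) :: gs := by
  obtain ⟨g, gs, h⟩ := List.exists_cons_of_ne_nil (List.splitBy_ne_nil.mpr (List.cons_ne_nil b l))
  have hflat := List.flatten_splitBy r (b :: l)
  obtain ⟨x, g, rfl⟩ := List.exists_cons_of_ne_nil
    (List.ne_nil_of_mem_splitBy (h ▸ List.mem_cons_self : g ∈ (b :: l).splitBy r))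
  rw [h, List.flatten_cons, List.cons_append, List.cons.injEq] at hflat
  exact ⟨g, gs, hflat.1 ▸ h⟩

theorem List.splitBy_cons_of_rel {r : α → α → Bool} {a b : α} {l g : List α}
    {gs : List (List α)} (hab : r a b) (h : (b :: l).splitBy r = (b :: g) :: gs) :
    (a :: b :: l).splitBy r = (a :: b :: g) :: gs := by
  obtain ⟨hflat, hnil, hchain, hbound⟩ := List.splitBy_eq_iff.mp h
  rw [List.splitBy_eq_iff]
  refine ⟨by simpa using hflat, by simpa using hnil, ?_, ?_⟩
  · simp only [List.mem_cons, forall_eq_or_imp] at hchain ⊢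
    exact ⟨hchain.1.cons_cons hab, hchain.2⟩
  · rw [List.isChain_cons] at hbound ⊢
    refine ⟨fun y hy => ?_, hbound.2⟩
    obtain ⟨_, hb, hr⟩ := hbound.1 y hy
    exact ⟨List.cons_ne_nil _ _, hb, by rwa [List.getLast_cons (List.cons_ne_nil _ _)]⟩

theorem List.sum_filter_add_sum_filter_not {M : Type*} [AddCommMonoid M] (p : M → Bool)
    (l : List M) : (l.filter p).sum + (l.filter fun x => !p x).sum = l.sum := by
  induction l with
  | nil => simp
  | cons x l ih => cases hx : p x <;> simp [hx, ← ih, add_left_comm, add_assoc]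

theorem List.sum_map_toNat (p : α → Bool) (l : List α) :
    (l.map fun x => (p x).toNat).sum = l.countP p := by
  induction l with
  | nil => simp
  | cons x l ih => cases hx : p x <;> simp [hx, ih, add_comm]

end ListLemmas

/-! ### Long ascents and ascent lengths -/

theorem longAscents_D_cons (l : List DyckStep) : longAscents (D :: l) = longAscents l := by
  match l with
  | [] => rfl
  | U :: l =>
    rw [longAscents, ← List.singleton_append, List.splitBy_append_cons _ (by simp)]
    rfl
  | D :: l =>
    obtain ⟨g, gs, h⟩ := List.exists_splitBy_cons_eq (· == ·) D l
    rw [longAscents, longAscents, List.splitBy_cons_of_rel rfl h, h]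
    simp

theorem longAscents_replicate_U (a : ℕ) :
    longAscents (List.replicate a U) = if 2 ≤ a then 1 else 0 := by
  rcases Nat.eq_zero_or_pos a with rfl | ha
  · rfl
  · rw [longAscents, List.splitBy_of_isChain (by simpa [Nat.pos_iff_ne_zero] using ha)
      (List.isChain_replicate_of_rel a (by simp))]
    obtain ⟨a, rfl⟩ := Nat.exists_eq_add_of_lt ha
    simp [List.replicate_succ, List.filter_cons, apply_ite List.length]

theorem longAscents_replicate_U_append_D_cons (a : ℕ) (l : List DyckStep) :
    longAscents (List.replicate a U ++ D :: l) = (if 2 ≤ a then 1 else 0) + longAscents l := by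
  rw [← longAscents_replicate_U, ← longAscents_D_cons l, longAscents, longAscents, longAscents,
    List.splitBy_append_cons _ (fun x hx => by
      obtain ⟨-, rfl⟩ := by simpa [List.getLast?_replicate] using hx
      rfl),
    List.filter_append, List.length_append]

def ofAscentLengths (g : List ℕ) : List DyckStep := [D].intercalate (g.map (List.replicate · U))

def ascentLengths (l : List DyckStep) : List ℕ := (l.splitOn D).map List.length

@[simp] theorem ofAscentLengths_singleton (a : ℕ) : ofAscentLengths [a] = List.replicate a U := by
  simp [ofAscentLengths]

theorem ofAscentLengths_cons_cons (a b : ℕ) (g : List ℕ) :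
    ofAscentLengths (a :: b :: g) = List.replicate a U ++ D :: ofAscentLengths (b :: g) := by
  simp [ofAscentLengths, List.intercalate_cons_cons]

theorem ofAscentLengths_succ_cons (a : ℕ) (g : List ℕ) :
    ofAscentLengths ((a + 1) :: g) = U :: ofAscentLengths (a :: g) := by
  cases g <;> simp [ofAscentLengths_cons_cons, List.replicate_succ]

theorem ofAscentLengths_zero_cons {g : List ℕ} (hg : g ≠ []) :
    ofAscentLengths (0 :: g) = D :: ofAscentLengths g := by
  obtain ⟨b, g, rfl⟩ := List.exists_cons_of_ne_nil hg
  simp [ofAscentLengths_cons_cons]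

theorem ascentLengths_ofAscentLengths {g : List ℕ} (hg : g ≠ []) :
    ascentLengths (ofAscentLengths g) = g := by
  rw [ascentLengths, ofAscentLengths, List.splitOn_intercalate _ (by simp) (by simpa using hg)]
  simp [Function.comp_def]

theorem ofAscentLengths_ascentLengths (l : List DyckStep) :
    ofAscentLengths (ascentLengths l) = l := by
  induction l with
  | nil => simp [ascentLengths]
  | cons x l ih =>
    obtain ⟨p, ps, hl⟩ := List.exists_cons_of_ne_nil (List.splitOn_ne_nil D l)
    rw [ascentLengths, hl] at ih
    cases x with
    | U => simpa [ascentLengths, List.splitOn_cons_eq_if_modifyHead, hl, ofAscentLengths_succ_cons]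
    | D => simpa [ascentLengths, List.splitOn_cons_eq_if_modifyHead, hl, ofAscentLengths_zero_cons]

theorem ascentLengths_ne_nil (l : List DyckStep) : ascentLengths l ≠ [] := by
  simp [ascentLengths]

theorem count_U_ofAscentLengths (g : List ℕ) : (ofAscentLengths g).count U = g.sum := by
  induction g with
  | nil => rfl
  | cons a g ih =>
    cases g with
    | nil => simp
    | cons b g => simp_all [ofAscentLengths_cons_cons]

theorem count_D_ofAscentLengths (g : List ℕ) : (ofAscentLengths g).count D = g.length - 1 := by
  induction g with
  | nil => rfl
  | cons a g ih =>
    cases g with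
    | nil => simp [List.count_replicate]
    | cons b g => simp_all [ofAscentLengths_cons_cons, List.count_replicate]

theorem longAscents_ofAscentLengths (g : List ℕ) :
    longAscents (ofAscentLengths g) = g.countP (2 ≤ ·) := by
  induction g with
  | nil => rfl
  | cons a g ih =>
    cases g with
    | nil => simp [longAscents_replicate_U, List.countP_cons]
    | cons b g =>
      rw [ofAscentLengths_cons_cons, longAscents_replicate_U_append_D_cons, ih,
        List.countP_cons (a := a), add_comm]
      simp

theorem length_ascentLengths (l : List DyckStep) : (ascentLengths l).length = l.count D + 1 := by
  have h := count_D_ofAscentLengths (ascentLengths l)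
  rw [ofAscentLengths_ascentLengths] at h
  have := List.length_pos_iff.mpr (ascentLengths_ne_nil l)
  omega

theorem sum_ascentLengths (l : List DyckStep) : (ascentLengths l).sum = l.count U := by
  simpa [ofAscentLengths_ascentLengths] using (count_U_ofAscentLengths (ascentLengths l)).symm

theorem longAscents_eq_countP_ascentLengths (l : List DyckStep) :
    longAscents l = (ascentLengths l).countP (2 ≤ ·) := by
  conv_lhs => rw [← ofAscentLengths_ascentLengths l]
  exact longAscents_ofAscentLengths _

/-! ### Heights of paths and excesses of ascent lengths -/

def height (l : List DyckStep) : ℤ := l.count U - l.count D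

def excess (g : List ℕ) (t : ℕ) : ℤ := (g.take t).sum - t

@[simp] theorem height_nil : height [] = 0 := rfl

theorem height_append (l l' : List DyckStep) : height (l ++ l') = height l + height l' := by
  simp only [height, List.count_append]; push_cast; ring

@[simp] theorem height_replicate_U (a : ℕ) : height (List.replicate a U) = a := by
  simp [height, List.count_replicate]

@[simp] theorem height_D_cons (l : List DyckStep) : height (D :: l) = height l - 1 := by
  simp only [height, List.count_cons_self, List.count_cons_of_ne (by decide : D ≠ U)]
  push_cast
  ring

@[simp] theorem excess_zero (g : List ℕ) : excess g 0 = 0 := by simp [excess]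

@[simp] theorem excess_cons_succ (a : ℕ) (g : List ℕ) (t : ℕ) :
    excess (a :: g) (t + 1) = a - 1 + excess g t := by
  simp only [excess, List.take_succ_cons, List.sum_cons]
  push_cast
  ring

theorem forall_height_take_replicate_U (c : ℤ) (a : ℕ) :
    (∀ i, 0 ≤ c + height ((List.replicate a U).take i)) ↔ 0 ≤ c := by
  refine ⟨fun h => by simpa using h 0, fun hc i => ?_⟩
  simp only [List.take_replicate, height_replicate_U]
  omega

theorem forall_height_take_replicate_U_append_D_cons (c : ℤ) (a : ℕ) (l : List DyckStep) :
    (∀ i, 0 ≤ c + height ((List.replicate a U ++ D :: l).take i)) ↔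
      0 ≤ c ∧ ∀ i, 0 ≤ c + a - 1 + height (l.take i) := by
  have hshift (i : ℕ) : (List.replicate a U ++ D :: l).take (a + (i + 1)) =
      List.replicate a U ++ D :: l.take i := by
    simpa using List.take_length_add_append (l₁ := List.replicate a U) (l₂ := D :: l) (i + 1)
  constructor
  · intro h
    refine ⟨by simpa using h 0, fun i => ?_⟩
    have := h (a + (i + 1))
    rw [hshift, height_append, height_D_cons, height_replicate_U] at this
    linarith
  · rintro ⟨hc, h⟩ i
    rcases le_or_gt i a with hi | hi
    · rw [List.take_append_of_le_length (by simpa using hi)]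
      exact (forall_height_take_replicate_U c a).mpr hc i
    · obtain ⟨j, rfl⟩ : ∃ j, i = a + (j + 1) := ⟨i - a - 1, by omega⟩
      rw [hshift, height_append, height_D_cons, height_replicate_U]
      linarith [h j]

theorem forall_excess_cons (c : ℤ) (a : ℕ) (g : List ℕ) :
    (∀ t < (a :: g).length, 0 ≤ c + excess (a :: g) t) ↔
      0 ≤ c ∧ ∀ t < g.length, 0 ≤ c + a - 1 + excess g t := by
  constructor
  · intro h
    refine ⟨by simpa using h 0 (by simp), fun t ht => ?_⟩
    have := h (t + 1) (by simpa using ht)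
    rw [excess_cons_succ] at this
    linarith
  · rintro ⟨hc, h⟩ (_ | t) ht
    · simpa using hc
    · rw [excess_cons_succ]
      linarith [h t (by simpa using ht)]

-- `c` is the height at which the path starts; this slack makes the induction go through.
theorem forall_height_take_ofAscentLengths (c : ℤ) {g : List ℕ} (hg : g ≠ []) :
    (∀ i, 0 ≤ c + height ((ofAscentLengths g).take i)) ↔ ∀ t < g.length, 0 ≤ c + excess g t := by
  induction g generalizing c with
  | nil => exact absurd rfl hg
  | cons a g ih =>
    rw [forall_excess_cons]
    cases g with
    | nil => simpa using forall_height_take_replicate_U c a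
    | cons b g =>
      rw [ofAscentLengths_cons_cons, forall_height_take_replicate_U_append_D_cons, ih _ (by simp)]

def IsDominating (g : List ℕ) : Prop := ∀ t < g.length, 0 ≤ excess g t

instance : DecidablePred IsDominating := fun g => inferInstanceAs (Decidable (∀ t < g.length, _))

/-! ### The cycle lemma -/

def IsFirstArgmin {β : Type*} [LinearOrder β] (f : ℕ → β) (m r : ℕ) : Prop :=
  r < m ∧ (∀ u < r, f r < f u) ∧ ∀ u < m, f r ≤ f u

theorem existsUnique_isFirstArgmin {β : Type*} [LinearOrder β] (f : ℕ → β) {m : ℕ} (hm : 0 < m) :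
    ∃! r, IsFirstArgmin f m r := by
  classical
  have hmin : ∃ r, r < m ∧ ∀ u < m, f r ≤ f u := by
    obtain ⟨r, hr, h⟩ := Finset.exists_min_image (Finset.range m) f ⟨0, by simpa using hm⟩
    exact ⟨r, by simpa using hr, fun u hu => h u (by simpa using hu)⟩
  obtain ⟨hlt, hle⟩ := Nat.find_spec hmin
  have hfirst : IsFirstArgmin f m (Nat.find hmin) :=
    ⟨hlt, fun u hu => lt_of_not_ge fun hfu => Nat.find_min hmin hu
      ⟨hu.trans hlt, fun v hv => hfu.trans (hle v hv)⟩, hle⟩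
  refine ⟨Nat.find hmin, hfirst, fun r hr => ?_⟩
  rcases lt_trichotomy r (Nat.find hmin) with h | h | h
  · exact absurd (hfirst.2.1 r h) (not_lt.mpr (hr.2.2 _ hlt))
  · exact h
  · exact absurd (hr.2.1 _ h) (not_lt.mpr (hle r hr.1))

theorem excess_rotate_of_add_le {g : List ℕ} {r t : ℕ} (h : r + t ≤ g.length) :
    excess (g.rotate r) t = excess g (r + t) - excess g r := by
  rw [excess, excess, excess, List.rotate_eq_drop_append_take (by omega),
    List.take_append_of_le_length (by rw [List.length_drop]; omega), List.take_add, List.sum_append]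
  push_cast; ring

theorem excess_rotate_length_sub_add {g : List ℕ} {r i : ℕ} (hr : r ≤ g.length) (hi : i ≤ r) :
    excess (g.rotate r) (g.length - r + i) = excess g g.length - excess g r + excess g i := by
  have hdrop : (g.drop r).length = g.length - r := List.length_drop
  rw [excess, excess, excess, excess, List.rotate_eq_drop_append_take hr, ← hdrop,
    List.take_length_add_append, hdrop, List.take_take, min_eq_left hi, List.take_length,
    List.sum_append, ← List.sum_take_add_sum_drop g r]
  push_cast [Nat.cast_sub hr]; ring

theorem excess_length {g : List ℕ} (hg : g.sum + 1 = g.length) : excess g g.length = -1 := by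
  rw [excess, List.take_length]; omega

theorem isDominating_rotate_iff {g : List ℕ} (hg : g.sum + 1 = g.length) {r : ℕ}
    (hr : r < g.length) : IsDominating (g.rotate r) ↔ IsFirstArgmin (excess g) g.length r := by
  have hend := excess_length hg
  rw [IsDominating, List.length_rotate]
  constructor
  · intro h
    have hbefore (u : ℕ) (hu : u < r) : excess g r < excess g u := by
      have := h (g.length - r + u) (by omega)
      rw [excess_rotate_length_sub_add hr.le hu.le] at this
      linarith
    refine ⟨hr, hbefore, fun u hu => ?_⟩
    rcases lt_or_ge u r with hur | hur
    · exact (hbefore u hur).le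
    · have := h (u - r) (by omega)
      rw [excess_rotate_of_add_le (by omega), Nat.add_sub_cancel' hur] at this
      linarith
  · rintro ⟨-, hbefore, hmin⟩ t ht
    rcases lt_or_ge (r + t) g.length with hrt | hrt
    · rw [excess_rotate_of_add_le hrt.le]
      linarith [hmin (r + t) hrt]
    · obtain ⟨i, rfl⟩ : ∃ i, t = g.length - r + i := ⟨t - (g.length - r), by omega⟩
      rw [excess_rotate_length_sub_add hr.le (by omega)]
      linarith [hbefore i (by omega)]

theorem existsUnique_isDominating_rotate {g : List ℕ} (hg : g.sum + 1 = g.length) :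
    ∃! r, r < g.length ∧ IsDominating (g.rotate r) := by
  obtain ⟨r, hr, huniq⟩ := existsUnique_isFirstArgmin (excess g) (show 0 < g.length by omega)
  refine ⟨r, ⟨hr.1, (isDominating_rotate_iff hg hr.1).mpr hr⟩, fun r' ⟨hr', hdom⟩ => ?_⟩
  exact huniq r' ((isDominating_rotate_iff hg hr').mp hdom)

theorem eq_of_rotate_eq_of_isDominating {g g' : List ℕ} {r r' : ℕ} (hg : g.sum + 1 = g.length)
    (hlen : g'.length = g.length) (hr : r < g.length) (hr' : r' < g.length)
    (hdom : IsDominating g) (hdom' : IsDominating g') (h : g.rotate r = g'.rotate r') :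
    g = g' ∧ r = r' := by
  -- rotating back by `g.length - r'` exhibits `g'` as a rotation of `g`
  have hback : g.rotate ((r + (g.length - r')) % g.length) = g' := by
    rw [List.rotate_mod, ← List.rotate_rotate, h, List.rotate_rotate, Nat.add_sub_cancel' hr'.le,
      ← hlen, List.rotate_length]
  have hmod : (r + (g.length - r')) % g.length = 0 :=
    (existsUnique_isDominating_rotate hg).unique ⟨Nat.mod_lt _ (by omega), hback ▸ hdom'⟩
      ⟨by omega, by simpa⟩
  obtain rfl : r = r' := by
    rcases le_or_gt r' r with hle | hlt
    · rw [show r + (g.length - r') = r - r' + g.length by omega, Nat.add_mod_right,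
        Nat.mod_eq_of_lt (by omega)] at hmod
      omega
    · rw [Nat.mod_eq_of_lt (by omega)] at hmod
      omega
  exact ⟨List.rotate_eq_rotate.mp h, rfl⟩

open Finset

theorem card_filter_isDominating_mul {S : Finset (List ℕ)} {m : ℕ}
    (hS : ∀ g ∈ S, g.length = m ∧ g.sum + 1 = m) (hrot : ∀ g ∈ S, ∀ r, g.rotate r ∈ S) :
    #{g ∈ S | IsDominating g} * m = #S := by
  rw [← card_range m, ← card_product]
  refine card_bij (fun p _ => p.1.rotate p.2) (fun p hp => ?_) (fun p hp p' hp' h => ?_)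
    (fun g hg => ?_)
  · simp only [mem_product, mem_filter] at hp
    exact hrot _ hp.1.1 _
  · simp only [mem_product, mem_filter, mem_range] at hp hp'
    obtain ⟨hlen, hsum⟩ := hS _ hp.1.1
    obtain ⟨h1, h2⟩ := eq_of_rotate_eq_of_isDominating (hlen ▸ hsum)
      ((hS _ hp'.1.1).1.trans hlen.symm) (hlen ▸ hp.2) (hlen ▸ hp'.2) hp.1.2 hp'.1.2 h
    exact Prod.ext h1 h2
  · obtain ⟨hlen, hsum⟩ := hS g hg
    obtain ⟨r, ⟨hr, hdom⟩, -⟩ := existsUnique_isDominating_rotate (hlen ▸ hsum)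
    refine ⟨(g.rotate r, (m - r) % m), ?_, ?_⟩
    · simp only [mem_product, mem_filter, mem_range]
      exact ⟨⟨hrot g hg r, hdom⟩, Nat.mod_lt _ (by omega)⟩
    · have hlen' : (g.rotate r).length = m := by rw [List.length_rotate, hlen]
      dsimp only
      rw [← hlen', List.rotate_mod, List.rotate_rotate, hlen', Nat.add_sub_cancel' (by omega),
        ← hlen, List.rotate_length]

/-! ### Counting sequences by their entries `≥ 2` -/

def weakCompositions : ℕ → ℕ → Finset (List ℕ)
  | 0, s => if s = 0 then {[]} else ∅
  | m + 1, s => (antidiagonal s).biUnion fun p => (weakCompositions m p.2).image (p.1 :: ·)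

theorem mem_weakCompositions {m s : ℕ} {l : List ℕ} :
    l ∈ weakCompositions m s ↔ l.length = m ∧ l.sum = s := by
  induction m generalizing s l with
  | zero =>
    rw [weakCompositions]
    split_ifs with hs <;> cases l <;> simp_all [eq_comm]
  | succ m ih =>
    cases l <;> simp [weakCompositions, ih, eq_comm, and_comm]

theorem card_filter_weakCompositions_zero (q : ℕ → Prop) [DecidablePred q] (s : ℕ) :
    #{l ∈ weakCompositions 0 s | ∀ v ∈ l, q v} = if s = 0 then 1 else 0 := by
  rw [weakCompositions]
  split_ifs
  · rw [filter_singleton, if_pos (by simp), card_singleton]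
  · simp

theorem card_filter_weakCompositions_succ (q : ℕ → Prop) [DecidablePred q] (m s : ℕ) :
    #{l ∈ weakCompositions (m + 1) s | ∀ v ∈ l, q v} =
      ∑ p ∈ antidiagonal s, if q p.1 then #{l ∈ weakCompositions m p.2 | ∀ v ∈ l, q v} else 0 := by
  rw [weakCompositions, filter_biUnion, card_biUnion]
  · refine sum_congr rfl fun p _ => ?_
    rw [filter_image, card_image_of_injective _ (List.cons_injective)]
    split_ifs with hq <;> simp [hq]
  · intro p hp p' hp' hne
    simp only [Function.onFun, disjoint_left, mem_filter, mem_image]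
    rintro _ ⟨⟨l, -, rfl⟩, -⟩ ⟨⟨l', -, hl⟩, -⟩
    simp only [mem_coe, HasAntidiagonal.mem_antidiagonal] at hp hp'
    have hhead := (List.cons_eq_cons.mp hl).1
    exact hne (Prod.ext hhead.symm (by omega))

theorem card_filter_weakCompositions_le_one (m t : ℕ) :
    #{l ∈ weakCompositions m t | ∀ v ∈ l, v ≤ 1} = m.choose t := by
  induction m generalizing t with
  | zero =>
    rw [card_filter_weakCompositions_zero]
    cases t
    · simp
    · simp
  | succ m ih =>
    rw [card_filter_weakCompositions_succ]
    cases t with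
    | zero => simp [ih]
    | succ t =>
      rw [Nat.sum_antidiagonal_succ, Nat.sum_antidiagonal_eq_sum_range_succ_mk]
      simp [ih, Nat.choose_succ_succ', add_comm]

theorem card_weakCompositions_succ_eq_sum (m s : ℕ) :
    #(weakCompositions (m + 1) s) = ∑ i ∈ range (s + 1), #(weakCompositions m i) := by
  have := card_filter_weakCompositions_succ (fun _ => True) m s
  simp only [imp_true_iff, filter_true, if_true] at this
  rw [this, ← Nat.sum_antidiagonal_swap, Nat.sum_antidiagonal_eq_sum_range_succ_mk]
  rfl

theorem card_weakCompositions_succ (k s : ℕ) :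
    #(weakCompositions (k + 1) s) = (s + k).choose k := by
  induction k generalizing s with
  | zero =>
    rw [card_weakCompositions_succ_eq_sum, sum_eq_single_of_mem 0 (by simp)]
    · simp [weakCompositions]
    · intro i _ hi
      simp [weakCompositions, hi]
  | succ k ih =>
    rw [card_weakCompositions_succ_eq_sum]
    simp only [ih, Nat.sum_range_add_choose, add_assoc]

section Interleave

variable {α : Type*}

def interleave : List ℕ → List α → List α → List α
  | 1 :: pat, x :: b, c => x :: interleave pat b c
  | 0 :: pat, b, x :: c => x :: interleave pat b c
  | _, _, _ => []

theorem interleave_map_filter (p : α → Bool) (l : List α) :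
    interleave (l.map fun x => (p x).toNat) (l.filter p) (l.filter fun x => !p x) = l := by
  induction l with
  | nil => rfl
  | cons x l ih => cases hx : p x <;> simp [hx, interleave, ih]

theorem map_filter_interleave (p : α → Bool) {pat : List ℕ} {b c : List α}
    (hpat : ∀ v ∈ pat, v ≤ 1) (hb : b.length = pat.sum) (hc : pat.length = b.length + c.length)
    (hpb : ∀ x ∈ b, p x) (hpc : ∀ x ∈ c, p x = false) :
    (interleave pat b c).map (fun x => (p x).toNat) = pat ∧
      (interleave pat b c).filter p = b ∧ (interleave pat b c).filter (fun x => !p x) = c := by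
  induction pat generalizing b c with
  | nil =>
    rw [List.length_nil, eq_comm, Nat.add_eq_zero_iff, List.length_eq_zero_iff,
      List.length_eq_zero_iff] at hc
    obtain ⟨rfl, rfl⟩ := hc
    simp [interleave]
  | cons v pat ih =>
    simp only [List.mem_cons, forall_eq_or_imp] at hpat
    simp only [List.sum_cons, List.length_cons] at hb hc
    obtain ⟨hv, hpat⟩ := hpat
    have hsum : pat.sum ≤ pat.length := by simpa using List.sum_le_card_nsmul pat 1 hpat
    interval_cases v
    · obtain ⟨x, c, rfl⟩ :=
        List.exists_cons_of_ne_nil (l := c) (by rintro rfl; rw [List.length_nil] at hc; omega)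
      simp only [List.mem_cons, forall_eq_or_imp, List.length_cons] at hpc hc
      obtain ⟨h1, h2, h3⟩ := ih hpat (by omega) (by omega) hpb hpc.2
      simp [interleave, hpc.1, h1, h2, h3]
    · obtain ⟨x, b, rfl⟩ :=
        List.exists_cons_of_ne_nil (l := b) (by rintro rfl; rw [List.length_nil] at hb; omega)
      simp only [List.mem_cons, forall_eq_or_imp, List.length_cons] at hpb hb hc
      obtain ⟨h1, h2, h3⟩ := ih hpat (by omega) (by omega) hpb.2 hpc
      simp [interleave, hpb.1, h1, h2, h3]

end Interleave

def largeSplit (l : List ℕ) : (List ℕ × List ℕ) × List ℕ :=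
  ((l.map fun v => (decide (2 ≤ v)).toNat, l.filter (2 ≤ ·)), l.filter fun v => !decide (2 ≤ v))

def largeSplitTriples (m s k j : ℕ) : Finset ((List ℕ × List ℕ) × List ℕ) :=
  ({p ∈ weakCompositions m k | ∀ v ∈ p, v ≤ 1} ×ˢ {b ∈ weakCompositions k j | ∀ v ∈ b, 2 ≤ v}) ×ˢ
    {c ∈ weakCompositions (m - k) (s - j) | ∀ v ∈ c, v ≤ 1}

theorem largeSplit_mem_largeSplitTriples {m s : ℕ} {l : List ℕ} (hl : l ∈ weakCompositions m s) :
    largeSplit l ∈ largeSplitTriples m s (l.countP (2 ≤ ·)) (l.filter (2 ≤ ·)).sum := by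
  rw [mem_weakCompositions] at hl
  have hlen := List.length_eq_length_filter_add (l := l) (fun v => decide (2 ≤ v))
  have hsum := List.sum_filter_add_sum_filter_not (fun v => decide (2 ≤ v)) l
  rw [← List.countP_eq_length_filter] at hlen
  simp only [largeSplit, largeSplitTriples, mem_product, mem_filter, mem_weakCompositions,
    List.length_map, List.sum_map_toNat, List.mem_map, List.mem_filter]
  refine ⟨⟨⟨⟨hl.1, trivial⟩, ?_⟩, ⟨List.countP_eq_length_filter.symm, trivial⟩,
    fun v hv => by simpa using hv.2⟩,
    ⟨by omega, by omega⟩, fun v hv => Nat.le_of_lt_succ (by simpa using hv.2)⟩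
  rintro _ ⟨v, -, rfl⟩
  exact Bool.toNat_le _

theorem largeSplit_interleave {m s k j : ℕ} {t : (List ℕ × List ℕ) × List ℕ}
    (ht : t ∈ largeSplitTriples m s k j) : largeSplit (interleave t.1.1 t.1.2 t.2) = t := by
  obtain ⟨⟨pat, b⟩, c⟩ := t
  simp only [largeSplitTriples, mem_product, mem_filter, mem_weakCompositions] at ht
  obtain ⟨⟨⟨⟨hpl, hps⟩, hp1⟩, ⟨hbl, -⟩, hb2⟩, ⟨hcl, -⟩, hc1⟩ := ht
  have hkm : k ≤ m := hps ▸ hpl ▸ by simpa using List.sum_le_card_nsmul pat 1 hp1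
  obtain ⟨h1, h2, h3⟩ := map_filter_interleave (fun v => decide (2 ≤ v)) (c := c) hp1
    (hbl.trans hps.symm) (by omega) (by simpa using hb2) (fun v hv => by simpa using hc1 v hv)
  simp only [largeSplit, h1, h2, h3]

theorem interleave_mem_filter_weakCompositions {m s k j : ℕ} (hj : j ≤ s)
    {t : (List ℕ × List ℕ) × List ℕ} (ht : t ∈ largeSplitTriples m s k j) :
    interleave t.1.1 t.1.2 t.2 ∈ {l ∈ weakCompositions m s |
      l.countP (2 ≤ ·) = k ∧ (l.filter (2 ≤ ·)).sum = j} := by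
  have h := largeSplit_interleave ht
  obtain ⟨⟨pat, b⟩, c⟩ := t
  simp only [largeSplitTriples, mem_product, mem_filter, mem_weakCompositions] at ht
  simp only [largeSplit, Prod.mk.injEq] at h
  rw [mem_filter, mem_weakCompositions, ← List.length_map (f := fun v => (decide (2 ≤ v)).toNat),
    h.1.1, ← List.sum_filter_add_sum_filter_not (fun v => decide (2 ≤ v)), h.1.2, h.2,
    List.countP_eq_length_filter, h.1.2]
  omega

theorem card_filter_countP_two_le_sum_eq {m s k j : ℕ} (hj : j ≤ s) :
    #{l ∈ weakCompositions m s | l.countP (2 ≤ ·) = k ∧ (l.filter (2 ≤ ·)).sum = j} =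
      m.choose k * #{b ∈ weakCompositions k j | ∀ v ∈ b, 2 ≤ v} * (m - k).choose (s - j) := by
  rw [← card_filter_weakCompositions_le_one, ← card_filter_weakCompositions_le_one, ← card_product,
    ← card_product]
  refine card_nbij' largeSplit (fun t => interleave t.1.1 t.1.2 t.2) (fun l hl => ?_)
    (fun t ht => interleave_mem_filter_weakCompositions hj ht)
    (fun l _ => interleave_map_filter _ l) (fun t ht => largeSplit_interleave ht)
  simp only [coe_filter, Set.mem_ofPred_eq] at hl
  obtain ⟨hl, rfl, rfl⟩ := hl
  exact largeSplit_mem_largeSplitTriples hl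

theorem filter_two_le_weakCompositions {k j : ℕ} (h : 2 * k ≤ j) :
    {l ∈ weakCompositions k j | ∀ v ∈ l, 2 ≤ v} = (weakCompositions k (j - 2 * k)).map
      ⟨List.map (· + 2), List.map_injective_iff.mpr (add_left_injective 2)⟩ := by
  ext l
  simp only [mem_filter, mem_map, mem_weakCompositions, Function.Embedding.coeFn_mk]
  constructor
  · rintro ⟨⟨hlen, hsum⟩, hl⟩
    have hback : (l.map (· - 2)).map (· + 2) = l := by
      rw [List.map_map]
      exact (List.map_congr_left fun v hv => Nat.sub_add_cancel (hl v hv)).trans (List.map_id' l)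
    refine ⟨l.map (· - 2), ⟨by simpa using hlen, ?_⟩, hback⟩
    have := congrArg List.sum hback
    simp only [List.sum_map_add, List.map_id', List.map_const', List.sum_replicate,
      List.length_map, hlen, smul_eq_mul] at this
    omega
  · rintro ⟨l, ⟨hlen, hsum⟩, rfl⟩
    refine ⟨⟨by rw [List.length_map, hlen], ?_⟩, by simp⟩
    simp only [List.sum_map_add, List.map_id', List.map_const', List.sum_replicate, hlen, hsum,
      smul_eq_mul]
    omega

theorem card_filter_two_le_weakCompositions {k j : ℕ} (hk : 1 ≤ k) (h : 2 * k ≤ j) :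
    #{l ∈ weakCompositions k j | ∀ v ∈ l, 2 ≤ v} = (j - k - 1).choose (k - 1) := by
  obtain ⟨k, rfl⟩ := Nat.exists_eq_add_of_le' hk
  rw [filter_two_le_weakCompositions h, card_map, card_weakCompositions_succ]
  congr 1
  omega

theorem card_filter_countP_two_le {m s k : ℕ} (hk : 1 ≤ k) :
    #{l ∈ weakCompositions m s | l.countP (2 ≤ ·) = k} =
      m.choose k * ∑ j ∈ Icc (2 * k) s, (j - k - 1).choose (k - 1) * (m - k).choose (s - j) := by
  rw [card_eq_sum_card_fiberwise (f := fun l => (l.filter (2 ≤ ·)).sum) (t := Icc (2 * k) s),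
    mul_sum]
  · refine sum_congr rfl fun j hj => ?_
    rw [mem_Icc] at hj
    rw [filter_filter, card_filter_countP_two_le_sum_eq hj.2,
      card_filter_two_le_weakCompositions hk hj.1]
    ring
  · intro l hl
    simp only [coe_filter, Set.mem_ofPred_eq, mem_weakCompositions] at hl
    have hlow := List.card_nsmul_le_sum (l.filter (2 ≤ ·)) 2
      (fun v hv => by simpa using List.of_mem_filter hv)
    have hhigh := List.sum_filter_add_sum_filter_not (fun v => decide (2 ≤ v)) l
    rw [← List.countP_eq_length_filter, hl.2, smul_eq_mul] at hlow
    simp only [coe_Icc, Set.mem_Icc]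
    omega

/-! ### Dyck paths -/

theorem isDominating_ascentLengths (w : DyckWord) : IsDominating (ascentLengths w.toList) := by
  have h := (forall_height_take_ofAscentLengths 0 (ascentLengths_ne_nil w.toList)).mp fun i => by
    have := w.count_D_le_count_U i
    rw [ofAscentLengths_ascentLengths, height]
    omega
  simpa [IsDominating] using h

def DyckWord.ofAscentLengths (g : List ℕ) (hsum : g.sum + 1 = g.length) (hg : IsDominating g) :
    DyckWord where
  toList := _root_.ofAscentLengths g
  count_U_eq_count_D := by rw [count_U_ofAscentLengths, count_D_ofAscentLengths]; omega
  count_D_le_count_U i := by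
    have hne : g ≠ [] := List.ne_nil_of_length_pos (by omega)
    have := (forall_height_take_ofAscentLengths 0 hne).mpr (by simpa [IsDominating] using hg) i
    rw [height] at this
    omega

theorem card_dyckWord_eq_card_filter_isDominating (n k : ℕ) :
    Nat.card {w : DyckWord // w.semilength = n ∧ longAscents w.toList = k} =
      #{g ∈ {g ∈ weakCompositions (n + 1) n | g.countP (2 ≤ ·) = k} | IsDominating g} := by
  rw [← Nat.card_eq_finsetCard]
  refine Nat.card_eq_of_bijective (fun w => ⟨ascentLengths w.1.toList, ?_⟩) ⟨?_, ?_⟩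
  · obtain ⟨w, hn, hk⟩ := w
    have hU : w.toList.count U = n := hn
    simp only [mem_filter, mem_weakCompositions, length_ascentLengths, sum_ascentLengths,
      ← longAscents_eq_countP_ascentLengths, ← DyckWord.semilength_eq_count_D, hn, hU, hk]
    exact ⟨by simp, isDominating_ascentLengths w⟩
  · intro w w' h
    have h := congrArg (fun g => ofAscentLengths g.1) h
    simp only [ofAscentLengths_ascentLengths] at h
    exact Subtype.ext (DyckWord.ext h)
  · rintro ⟨g, hg⟩
    simp only [mem_filter, mem_weakCompositions] at hg
    obtain ⟨⟨⟨hlen, hsum⟩, hk⟩, hdom⟩ := hg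
    have hne : g ≠ [] := List.ne_nil_of_length_pos (by omega)
    refine ⟨⟨DyckWord.ofAscentLengths g (by omega) hdom, ?_, ?_⟩, ?_⟩
    · simp [DyckWord.semilength, DyckWord.ofAscentLengths, count_U_ofAscentLengths, hsum]
    · simp [DyckWord.ofAscentLengths, longAscents_ofAscentLengths, hk]
    · simp [DyckWord.ofAscentLengths, ascentLengths_ofAscentLengths hne]

theorem card_dyckWord_mul (n k : ℕ) :
    Nat.card {w : DyckWord // w.semilength = n ∧ longAscents w.toList = k} * (n + 1) =
      #{g ∈ weakCompositions (n + 1) n | g.countP (2 ≤ ·) = k} := by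
  rw [card_dyckWord_eq_card_filter_isDominating]
  refine card_filter_isDominating_mul (fun g hg => ?_) (fun g hg r => ?_)
  · simp only [mem_filter, mem_weakCompositions] at hg
    omega
  · simp only [mem_filter, mem_weakCompositions] at hg ⊢
    rw [List.length_rotate, (List.rotate_perm g r).sum_eq, (List.rotate_perm g r).countP_eq]
    exact hg

/-- The number of Dyck paths of semilength `n` with exactly `k ≥ 1` long
ascents equals `(1/(n+1)) C(n+1,k) ∑_{j=2k}^n C(j-k-1, k-1) C(n+1-k, n-j)`. -/
theorem dyck_long_ascents_count (n k : ℕ) (hk : 1 ≤ k) :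
    (Nat.card {w : DyckWord // w.semilength = n ∧ longAscents w.toList = k} : ℚ) =
      (1 / (n + 1) : ℚ) * ((n + 1).choose k) *
        ∑ j ∈ Finset.Icc (2 * k) n, (((j - k - 1).choose (k - 1) : ℚ) *
          ((n + 1 - k).choose (n - j))) := by
  have h := card_dyckWord_mul n k
  rw [card_filter_countP_two_le hk] at h
  field_simp
  exact_mod_cast h
end

section
/- The sum over k of the coefficients c_{n,k} of the Kazhdan-Lusztig polynomial of the thagomizer matroid equals the n-th Catalan number: P_{T_n}(1) = \binom{2n}{n}/(n+1), where c_{n,k} = (1/(n+1)) \binom{n+1}{k} \sum_{j=2k}^{n} \binom{j-k-1}{k-1} \binom{n+1-k}{n-j} for k \ge 1 and c_{n,0} = 1. -/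
/-!
The series `G = 1 + X + X² + ⋯ = (1 - X)⁻¹` satisfies `G = (1 + X) + X² G`. Expanding
`G ^ (n + 1) = ((1 + X) + X² G) ^ (n + 1)` by the binomial theorem and comparing coefficients of
`X ^ n`: on the left it is `C(2n, n)`; the `k`-th binomial term contributes `C(n + 1, k)` times
the inner sum of `c_{n,k}`, except that the term `k = 0` contributes `n + 1`.
-/

open PowerSeries Finset

namespace PowerSeries

variable {R : Type*} [CommRing R]

theorem mk_one_eq_one_add_X_add_X_sq_mul_mk_one :
    (mk 1 : R⟦X⟧) = 1 + X + X ^ 2 * mk 1 := by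
  linear_combination (1 + X : R⟦X⟧) * mk_one_mul_one_sub_eq_one R

theorem coeff_mk_one_pow (d n : ℕ) :
    coeff n ((mk 1 : R⟦X⟧) ^ (d + 1)) = (d + n).choose d := by
  rw [mk_one_pow_eq_mk_choose_add, coeff_mk]

theorem coeff_one_add_X_pow (a i : ℕ) : coeff i ((1 + X : R⟦X⟧) ^ a) = a.choose i := by
  have h : (1 + X : R⟦X⟧) ^ a = ((1 + Polynomial.X) ^ a : Polynomial R) := by simp
  rw [h, Polynomial.coeff_coe, Polynomial.coeff_one_add_X_pow]

theorem coeff_X_sq_mul_mk_one_pow_mul_one_add_X_pow {k : ℕ} (hk : 0 < k) (a n : ℕ) :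
    coeff n ((X ^ 2 * mk 1 : R⟦X⟧) ^ k * (1 + X) ^ a) =
      ∑ j ∈ Icc (2 * k) n, ((j - k - 1).choose (k - 1) * a.choose (n - j) : R) := by
  obtain ⟨d, rfl⟩ := Nat.exists_eq_add_one_of_ne_zero hk.ne'
  rw [mul_pow, ← pow_mul, mul_assoc, coeff_X_pow_mul']
  split_ifs with h
  -- `j = 2k + p`, where `p` is the degree taken from `(mk 1) ^ k`
  · rw [coeff_mul, Nat.sum_antidiagonal_eq_sum_range_succ_mk, ← Ico_add_one_right_eq_Icc,
      sum_Ico_eq_sum_range, show n + 1 - 2 * (d + 1) = n - 2 * (d + 1) + 1 by omega]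
    refine sum_congr rfl fun p _ => ?_
    rw [coeff_mk_one_pow, coeff_one_add_X_pow]
    congr 3 <;> omega
  · rw [Icc_eq_empty (by omega), sum_empty]

end PowerSeries

theorem add_sum_choose_mul_sum_choose_mul_choose_eq_choose (n : ℕ) :
    (n + 1) + ∑ k ∈ Icc 1 n, (n + 1).choose k *
        ∑ j ∈ Icc (2 * k) n, (j - k - 1).choose (k - 1) * (n + 1 - k).choose (n - j) =
      (2 * n).choose n := by
  have hbinom : (PowerSeries.mk 1 : ℤ⟦X⟧) ^ (n + 1) = ∑ k ∈ range (n + 2),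
      (X ^ 2 * PowerSeries.mk 1) ^ k * (1 + X) ^ (n + 1 - k) * C ((n + 1).choose k : ℤ) := by
    simp only [map_natCast]
    rw [← add_pow, add_comm (X ^ 2 * _), ← mk_one_eq_one_add_X_add_X_sq_mul_mk_one]
  have hmiddle : ∀ k ∈ Icc 1 n, coeff n ((X ^ 2 * PowerSeries.mk 1 : ℤ⟦X⟧) ^ k *
      (1 + X) ^ (n + 1 - k)) * ((n + 1).choose k : ℤ) = (n + 1).choose k *
        ∑ j ∈ Icc (2 * k) n, ((j - k - 1).choose (k - 1) * (n + 1 - k).choose (n - j) : ℤ) :=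
    fun k hk => by
      rw [coeff_X_sq_mul_mk_one_pow_mul_one_add_X_pow (mem_Icc.1 hk).1, mul_comm]
  have hcoeff := congrArg (coeff n) hbinom
  simp only [map_sum, coeff_mul_C] at hcoeff
  -- the term `k = n + 1` vanishes and the term `k = 0` is `C(n + 1, n) = n + 1`
  rw [coeff_mk_one_pow, ← two_mul, sum_range_succ, sum_range_succ',
    coeff_X_sq_mul_mk_one_pow_mul_one_add_X_pow n.succ_pos, Icc_eq_empty (by omega), sum_empty,
    zero_mul, add_zero, pow_zero, one_mul, Nat.sub_zero, coeff_one_add_X_pow,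
    Nat.choose_succ_self_right, Nat.choose_zero_right, Nat.cast_one, mul_one, range_eq_Ico,
    sum_Ico_add' (fun k => coeff n ((X ^ 2 * PowerSeries.mk 1 : ℤ⟦X⟧) ^ k *
      (1 + X) ^ (n + 1 - k)) * ((n + 1).choose k : ℤ)),
    zero_add, Ico_add_one_right_eq_Icc, sum_congr rfl hmiddle, add_comm] at hcoeff
  exact_mod_cast hcoeff.symm

/-- The sum over `k` of the coefficients
`c_{n,k} = (1/(n+1)) C(n+1,k) ∑_{j=2k}^n C(j-k-1, k-1) C(n+1-k, n-j)` (for `k ≥ 1`, with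
`c_{n,0} = 1`) of the Kazhdan-Lusztig polynomial of the thagomizer matroid equals the `n`-th
Catalan number: `P_{T_n}(1) = C(2n, n)/(n+1)`. -/
theorem thagomizer_sum_catalan (n : ℕ) :
    (1 : ℚ) + ∑ k ∈ Finset.Icc 1 n, (1 / (n + 1) : ℚ) * ((n + 1).choose k) *
        ∑ j ∈ Finset.Icc (2 * k) n, (((j - k - 1).choose (k - 1) : ℚ) *
          ((n + 1 - k).choose (n - j))) =
      ((2 * n).choose n : ℚ) / (n + 1) := by
  rw [eq_div_iff (by positivity), ← add_sum_choose_mul_sum_choose_mul_choose_eq_choose n]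
  push_cast
  rw [add_mul, sum_mul]
  field_simp
end

section
/- Suppose polynomials Q_n(t) (n \ge 0) with deg Q_n < (n+1)/2 satisfy t^{n+1} Q_n(1/t) - Q_n(t) = \sum_{i=0}^{n-1} \binom{n}{i} 2^{n-i}(t-1)^{n-i} P_{T_i}(t) + \sum_{j=1}^{n} \binom{n}{j} ((t-1)^j + (t-1)(t-2)^j), and polynomials P_{T_n}(t) with deg P_{T_n} < (n+1)/2 satisfy t^{n+1} P_{T_n}(1/t) - P_{T_n}(t) = (t-1)^{n+1} + \sum_{i=0}^{n-1} \binom{n}{i} 2^{n-i}(t-1)^{n-i} P_{T_i}(t). Then for n \ge 2, Q_n(t) = P_{T_n}(t) + t. -/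
open Polynomial

private lemma reflect_sub' (f g : Polynomial ℚ) (N : ℕ) :
    reflect N (f - g) = reflect N f - reflect N g := by
  ext i
  simp [coeff_reflect]

private lemma sum_choose_pow (y : Polynomial ℚ) (n : ℕ) :
    ∑ j ∈ Finset.Icc 1 n, (n.choose j : Polynomial ℚ) * y ^ j = (y + 1) ^ n - 1 := by
  have h := add_pow y 1 n
  simp only [one_pow, mul_one] at h
  rw [h, Finset.sum_range_succ' (fun k => y ^ k * (n.choose k : Polynomial ℚ))]
  rw [← Finset.Ico_add_one_right_eq_Icc, Finset.sum_Ico_eq_sum_range]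
  simp [mul_comm, add_comm]

/-- Suppose polynomials `Q_n` with `deg Q_n < (n+1)/2` satisfy
`t^{n+1} Q_n(1/t) - Q_n(t) = ∑_{i=0}^{n-1} C(n,i) 2^{n-i}(t-1)^{n-i} P_{T_i}(t)
+ ∑_{j=1}^{n} C(n,j)((t-1)^j + (t-1)(t-2)^j)`, and polynomials `P_{T_n}` with
`deg P_{T_n} < (n+1)/2` satisfy `t^{n+1} P_{T_n}(1/t) - P_{T_n}(t) = (t-1)^{n+1}
+ ∑_{i=0}^{n-1} C(n,i) 2^{n-i}(t-1)^{n-i} P_{T_i}(t)`. Then for `n ≥ 2`,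
`Q_n(t) = P_{T_n}(t) + t`. -/
theorem kl_k2n_eq_thag_add_t (Q T : ℕ → Polynomial ℚ)
    (hQdeg : ∀ n, 2 * (Q n).natDegree < n + 1)
    (hTdeg : ∀ n, 2 * (T n).natDegree < n + 1)
    (hQ : ∀ n, (Q n).reflect (n + 1) - Q n =
      (∑ i ∈ Finset.range n, (n.choose i : Polynomial ℚ) * 2 ^ (n - i) *
          (Polynomial.X - 1) ^ (n - i) * T i) +
        ∑ j ∈ Finset.Icc 1 n, (n.choose j : Polynomial ℚ) *
          ((Polynomial.X - 1) ^ j + (Polynomial.X - 1) * (Polynomial.X - 2) ^ j))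
    (hT : ∀ n, (T n).reflect (n + 1) - T n =
      (Polynomial.X - 1) ^ (n + 1) +
        ∑ i ∈ Finset.range n, (n.choose i : Polynomial ℚ) * 2 ^ (n - i) *
          (Polynomial.X - 1) ^ (n - i) * T i)
    (n : ℕ) (hn : 2 ≤ n) :
    Q n = T n + Polynomial.X := by
  -- the second sum in hQ equals X^n - 1 + (X-1)*((X-1)^n - 1)
  have hsum : ∑ j ∈ Finset.Icc 1 n, (n.choose j : Polynomial ℚ) *
      ((Polynomial.X - 1) ^ j + (Polynomial.X - 1) * (Polynomial.X - 2) ^ j) =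
      (Polynomial.X ^ n - 1) + (Polynomial.X - 1) * ((Polynomial.X - 1) ^ n - 1) := by
    have h1 := sum_choose_pow (Polynomial.X - 1) n
    have h2 := sum_choose_pow (Polynomial.X - 2) n
    simp only [sub_add_cancel] at h1
    have h2' : (Polynomial.X - 2 + 1 : Polynomial ℚ) = Polynomial.X - 1 := by ring
    rw [h2'] at h2
    calc ∑ j ∈ Finset.Icc 1 n, (n.choose j : Polynomial ℚ) *
        ((Polynomial.X - 1) ^ j + (Polynomial.X - 1) * (Polynomial.X - 2) ^ j)
        = (∑ j ∈ Finset.Icc 1 n, (n.choose j : Polynomial ℚ) * (Polynomial.X - 1) ^ j)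
          + (Polynomial.X - 1) * ∑ j ∈ Finset.Icc 1 n,
            (n.choose j : Polynomial ℚ) * (Polynomial.X - 2) ^ j := by
          rw [Finset.mul_sum, ← Finset.sum_add_distrib]
          congr 1; ext j; ring
      _ = _ := by rw [h1, h2]
  -- key equation
  have key : reflect (n + 1) (Q n - T n - Polynomial.X) = Q n - T n - Polynomial.X := by
    have hE := sub_eq_sub_iff_sub_eq_sub.mp (congrArg₂ (· - ·) (hQ n) (hT n))
    rw [reflect_sub', reflect_sub']
    have hX : reflect (n + 1) (Polynomial.X : Polynomial ℚ) = Polynomial.X ^ n := by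
      have := reflect_monomial (n + 1) 1 (R := ℚ)
      rwa [pow_one, revAt_le (by omega), Nat.add_sub_cancel] at this
    rw [hX]
    have : (Q n).reflect (n + 1) - (T n).reflect (n + 1)
        = Q n - T n + (Polynomial.X ^ n - Polynomial.X) := by
      have e : ((Q n).reflect (n+1) - Q n) - ((T n).reflect (n+1) - T n)
          = Polynomial.X ^ n - Polynomial.X := by
        rw [hQ n, hT n, hsum]; ring
      linear_combination e
    rw [this]; ring
  -- degree bound
  set E := Q n - T n - Polynomial.X with hEdef
  have hdeg : 2 * E.natDegree < n + 1 := by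
    have h1 : E.natDegree ≤ max (max (Q n).natDegree (T n).natDegree)
        (Polynomial.X : Polynomial ℚ).natDegree :=
      le_trans (natDegree_sub_le _ _) (by
        exact max_le_max (natDegree_sub_le _ _) le_rfl)
    have hXdeg : (Polynomial.X : Polynomial ℚ).natDegree = 1 := natDegree_X
    have := hQdeg n; have := hTdeg n
    rw [hXdeg] at h1
    omega
  -- conclude E = 0
  have hE0 : E = 0 := by
    by_contra h
    set d := E.natDegree with hd
    have hlc : E.coeff d ≠ 0 := by
      rw [hd]; exact mt leadingCoeff_eq_zero.mp h
    have hco : E.coeff (n + 1 - d) = E.coeff d := by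
      conv_lhs => rw [← key]
      rw [coeff_reflect, revAt_le (by omega)]
      congr 1
      omega
    have hz : E.coeff (n + 1 - d) = 0 :=
      coeff_eq_zero_of_natDegree_lt (by omega)
    rw [hco] at hz
    exact hlc hz
  have := sub_eq_zero.mp hE0
  linear_combination this
end
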